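/- arXiv:0908.0429 — 7 statements merged into one kernel-verified Lean document; each statement's English description precedes it below -/
import Mathlib

section
/- Every strictly 2-balanced graph H is 2-connected. -/
/-!
Let `H` have `n` vertices, `m` edges and 2-density `d = (m - 1) / (n - 2)`. Two edges sharing
a vertex span a proper subgraph of 2-density `1`, so `d > 1`. If no two edges share a vertex,
`H` is a matching, so `2m ≤ n` and `d ≤ 1/2`, while two of its edges span 2-density `1/2`.

If `H - S` is disconnected for some `|S| ≤ 1`, there is a separation `(X, Y)` with `X ∩ Y = S`.
No edge lies in `X ∩ Y`, so the edges of `H` split between `H[X]` and `H[Y]`, and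
`|X| + |Y| ≤ n + 1`. A side with at least three vertices has 2-density `< d`, a side with at
most two vertices has at most one edge; summing gives `m - 2 < d (n - 3) = m - 1 - d`,
contradicting `d ≥ 1`.
-/

def Strictly2Balanced {V : Type*} [Fintype V] (H : SimpleGraph V) : Prop :=
  3 ≤ Fintype.card V ∧ 3 ≤ H.edgeSet.ncard ∧
  ∀ K : H.Subgraph, K ≠ ⊤ → 3 ≤ K.verts.ncard →
    ((H.edgeSet.ncard : ℝ) - 1) / ((Fintype.card V : ℝ) - 2) >
      ((K.edgeSet.ncard : ℝ) - 1) / ((K.verts.ncard : ℝ) - 2)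

open SimpleGraph Set

namespace SimpleGraph.Subgraph

variable {V : Type*} {G : SimpleGraph V}

theorem edgeSet_ncard_le_one_of_verts_ncard_le_two [Finite V] {K : G.Subgraph}
    (hK : K.verts.ncard ≤ 2) : K.edgeSet.ncard ≤ 1 := by
  refine (ncard_le_one_iff_subsingleton).2 ?_
  rintro ⟨x, y⟩ he ⟨p, q⟩ hf
  have hxy := K.adj_sub he
  have hverts : K.verts = {x, y} :=
    (eq_of_subset_of_ncard_le (pair_subset (K.edge_vert he) (K.edge_vert he.symm))
      (by rwa [ncard_pair hxy.ne]) (toFinite _)).symm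
  have hp : p ∈ ({x, y} : Set V) := hverts ▸ K.edge_vert hf
  have hq : q ∈ ({x, y} : Set V) := hverts ▸ K.edge_vert hf.symm
  have hpq := (K.adj_sub hf).ne
  simp only [mem_insert_iff, mem_singleton_iff] at hp hq
  rcases hp with rfl | rfl <;> rcases hq with rfl | rfl <;> simp_all [Sym2.eq_swap]

end SimpleGraph.Subgraph

namespace SimpleGraph

variable {V : Type*}

def IsSeparation (H : SimpleGraph V) (X Y : Set V) : Prop :=
  X ∪ Y = univ ∧ X ≠ univ ∧ Y ≠ univ ∧ ∀ a ∈ X \ Y, ∀ b ∈ Y \ X, ¬ H.Adj a b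

theorem exists_isSeparation_of_not_connected_induce {H : SimpleGraph V} {S : Set V}
    (hne : Sᶜ.Nonempty) (hS : ¬ (H.induce Sᶜ).Connected) :
    ∃ X Y, H.IsSeparation X Y ∧ X ∩ Y = S := by
  have : Nonempty (Sᶜ : Set V) := hne.to_subtype
  obtain ⟨x, y, hxy⟩ : ∃ x y, ¬ (H.induce Sᶜ).Reachable x y := by
    by_contra! hpre
    exact hS ⟨hpre⟩
  set C : Set V := (↑) '' {z | (H.induce Sᶜ).Reachable x z}
  have hCS : C ⊆ Sᶜ := by
    rintro _ ⟨z, -, rfl⟩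
    exact z.2
  refine ⟨C ∪ S, Cᶜ, ⟨?_, ?_, ?_, ?_⟩, ?_⟩
  · rw [union_right_comm, union_compl_self, univ_union]
  · refine ne_univ_iff_exists_notMem _ |>.2 ⟨y, ?_⟩
    rintro (⟨z, hz, hzy⟩ | hy)
    · exact hxy (Subtype.ext hzy ▸ hz)
    · exact y.2 hy
  · exact ne_univ_iff_exists_notMem _ |>.2 ⟨x, fun hx => hx ⟨x, Reachable.refl x, rfl⟩⟩
  · rintro _ ⟨⟨z, hz, rfl⟩ | hzS, hzC⟩ b ⟨hbC, hbX⟩ hadj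
    · exact hbC ⟨⟨b, fun hb => hbX (Or.inr hb)⟩, hz.trans (Adj.reachable hadj), rfl⟩
    · exact hzC fun hzC' => hCS hzC' hzS
  · rw [union_inter_distrib_right, inter_compl_self, empty_union,
      inter_eq_left.2 (subset_compl_comm.1 hCS)]

theorem IsSeparation.edgeSet_ncard_induce_add [Finite V] {H : SimpleGraph V} {X Y : Set V}
    (hsep : H.IsSeparation X Y) (hXY : (X ∩ Y).ncard ≤ 1) :
    ((⊤ : H.Subgraph).induce X).edgeSet.ncard + ((⊤ : H.Subgraph).induce Y).edgeSet.ncard =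
      H.edgeSet.ncard := by
  obtain ⟨hcover, -, -, hadj⟩ := hsep
  have mem_edgeSet_induce : ∀ (Z : Set V) a b,
      s(a, b) ∈ ((⊤ : H.Subgraph).induce Z).edgeSet ↔ a ∈ Z ∧ b ∈ Z ∧ H.Adj a b := by
    simp
  rw [← ncard_union_eq]
  · congr 1
    ext ⟨a, b⟩
    simp only [mem_union, mem_edgeSet_induce, mem_edgeSet]
    refine ⟨by tauto, fun hab => ?_⟩
    have ha : a ∈ X ∪ Y := hcover ▸ mem_univ a
    have hb : b ∈ X ∪ Y := hcover ▸ mem_univ b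
    have hXY_ab := hadj a
    have hXY_ba := hadj b
    simp only [mem_union, mem_sdiff] at ha hb hXY_ab hXY_ba
    have := hab.symm
    tauto
  · refine Set.disjoint_left.2 fun e h1 h2 => ?_
    induction e using Sym2.ind with | _ a b => ?_
    rw [mem_edgeSet_induce] at h1 h2
    exact h1.2.2.ne ((ncard_le_one_iff (toFinite _)).1 hXY ⟨h1.1, h2.1⟩ ⟨h1.2.1, h2.2.1⟩)

end SimpleGraph

namespace Strictly2Balanced

variable {V : Type*} [Fintype V] {H : SimpleGraph V}

theorem density_lt (h : Strictly2Balanced H) {K : H.Subgraph} (hK : K ≠ ⊤)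
    (hv : 3 ≤ K.verts.ncard) :
    ((K.edgeSet.ncard : ℝ) - 1) * (Fintype.card V - 2) <
      (H.edgeSet.ncard - 1) * (K.verts.ncard - 2) := by
  have hn : (3 : ℝ) ≤ Fintype.card V := by exact_mod_cast h.1
  have hv' : (3 : ℝ) ≤ K.verts.ncard := by exact_mod_cast hv
  have := h.2.2 K hK hv
  rwa [gt_iff_lt, div_lt_div_iff₀ (by linarith) (by linarith)] at this

theorem card_sub_two_lt_of_adj_of_adj (h : Strictly2Balanced H) {a b c d : V}
    (hab : H.Adj a b) (hcd : H.Adj c d) (hne : s(a, b) ≠ s(c, d)) :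
    (Fintype.card V : ℝ) - 2 <
      (H.edgeSet.ncard - 1) * ((({a, b} ∪ {c, d} : Set V).ncard : ℝ) - 2) := by
  set K := H.subgraphOfAdj hab ⊔ H.subgraphOfAdj hcd
  have hE : K.edgeSet.ncard = 2 := by
    simp only [K, Subgraph.edgeSet_sup, edgeSet_subgraphOfAdj, singleton_union, ncard_pair hne]
  have hV : 3 ≤ K.verts.ncard := by
    by_contra hV
    have := Subgraph.edgeSet_ncard_le_one_of_verts_ncard_le_two (K := K) (by omega)
    omega
  have hK : K ≠ ⊤ := fun hK => by
    have := congrArg (·.edgeSet.ncard) hK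
    simp only [hE, Subgraph.edgeSet_top] at this
    linarith [h.2.1]
  have := h.density_lt hK hV
  simp only [hE, K, Subgraph.verts_sup, subgraphOfAdj_verts, Nat.cast_ofNat] at this
  linarith

theorem card_le_edgeSet_ncard_of_adj_of_adj (h : Strictly2Balanced H) {a b c : V}
    (hab : H.Adj a b) (hbc : H.Adj b c) (hac : a ≠ c) :
    Fintype.card V ≤ H.edgeSet.ncard := by
  have hne : s(a, b) ≠ s(b, c) := fun he => hac (by simp_all)
  have h3 : ({a, b} ∪ {b, c} : Set V).ncard = 3 := by
    rw [ncard_eq_three]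
    exact ⟨a, b, c, hab.ne, hac, hbc.ne, by ext; simp; tauto⟩
  have := h.card_sub_two_lt_of_adj_of_adj hab hbc hne
  rw [h3, Nat.cast_ofNat] at this
  have : (Fintype.card V : ℝ) < H.edgeSet.ncard + 1 := by linarith
  exact Nat.lt_succ_iff.1 (by exact_mod_cast this)

theorem card_lt_two_mul_edgeSet_ncard (h : Strictly2Balanced H) :
    Fintype.card V < 2 * H.edgeSet.ncard := by
  obtain ⟨⟨a, b⟩, ⟨c, d⟩, hab, hcd, hne⟩ :=
    (one_lt_ncard_iff (toFinite _)).1 (by linarith [h.2.1])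
  have h4 : ({a, b} ∪ {c, d} : Set V).ncard ≤ 4 :=
    (ncard_union_le _ _).trans <|
      (add_le_add (ncard_insert_le _ _) (ncard_insert_le _ _)).trans (by simp)
  have := h.card_sub_two_lt_of_adj_of_adj hab hcd hne
  have hm : (1 : ℝ) ≤ (H.edgeSet.ncard : ℝ) - 1 := by
    have : (3 : ℝ) ≤ H.edgeSet.ncard := by exact_mod_cast h.2.1
    linarith
  have h4' : (({a, b} ∪ {c, d} : Set V).ncard : ℝ) ≤ 4 := by exact_mod_cast h4
  have : (Fintype.card V : ℝ) < 2 * H.edgeSet.ncard := by nlinarith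
  exact_mod_cast this

theorem card_le_edgeSet_ncard (h : Strictly2Balanced H) :
    Fintype.card V ≤ H.edgeSet.ncard := by
  classical
  by_contra hlt
  have hdeg : ∀ v, H.degree v ≤ 1 := fun b =>
    Finset.card_le_one.2 fun a ha c hc => by
      by_contra hac
      rw [mem_neighborFinset] at ha hc
      exact hlt (h.card_le_edgeSet_ncard_of_adj_of_adj ha.symm hc hac)
  have hsum : 2 * H.edgeSet.ncard ≤ Fintype.card V := by
    rw [← coe_edgeFinset, ncard_coe_finset, ← sum_degrees_eq_twice_card_edges]
    simpa using Finset.sum_le_sum fun v (_ : v ∈ Finset.univ) => hdeg v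
  linarith [h.card_lt_two_mul_edgeSet_ncard]

theorem not_isSeparation (h : Strictly2Balanced H) {X Y : Set V} (hXY : (X ∩ Y).ncard ≤ 1) :
    ¬ H.IsSeparation X Y := by
  intro hsep
  have hn : (3 : ℝ) ≤ Fintype.card V := by exact_mod_cast h.1
  have hm : (3 : ℝ) ≤ H.edgeSet.ncard := by exact_mod_cast h.2.1
  have hnm : (Fintype.card V : ℝ) ≤ H.edgeSet.ncard := by exact_mod_cast h.card_le_edgeSet_ncard
  have hE : (((⊤ : H.Subgraph).induce X).edgeSet.ncard : ℝ) +
      ((⊤ : H.Subgraph).induce Y).edgeSet.ncard = H.edgeSet.ncard := by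
    exact_mod_cast hsep.edgeSet_ncard_induce_add hXY
  have hV : (X.ncard : ℝ) + Y.ncard ≤ Fintype.card V + 1 := by
    have := ncard_union_add_ncard_inter X Y
    rw [hsep.1, ncard_univ, Nat.card_eq_fintype_card] at this
    exact_mod_cast (show X.ncard + Y.ncard ≤ Fintype.card V + 1 by omega)
  have side : ∀ Z : Set V, Z ≠ univ →
      (((⊤ : H.Subgraph).induce Z).edgeSet.ncard : ℝ) ≤ 1 ∨
      (Z.ncard : ℝ) + 1 ≤ Fintype.card V ∧
        ((((⊤ : H.Subgraph).induce Z).edgeSet.ncard : ℝ) - 1) * (Fintype.card V - 2) <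
          (H.edgeSet.ncard - 1) * (Z.ncard - 2) := by
    intro Z hZ
    by_cases hZ3 : 3 ≤ Z.ncard
    · have hK : (⊤ : H.Subgraph).induce Z ≠ ⊤ := fun hK => hZ (congrArg Subgraph.verts hK)
      have hZn : Z.ncard < Fintype.card V := Nat.card_eq_fintype_card (α := V) ▸ ncard_lt_card hZ
      exact Or.inr ⟨by exact_mod_cast hZn, h.density_lt hK hZ3⟩
    · have hZ2 : ((⊤ : H.Subgraph).induce Z).verts.ncard ≤ 2 := by
        rw [Subgraph.induce_verts]
        omega
      exact Or.inl (by exact_mod_cast Subgraph.edgeSet_ncard_le_one_of_verts_ncard_le_two hZ2)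
  rcases side X hsep.2.1 with hX | ⟨hXn, hX⟩ <;>
    rcases side Y hsep.2.2.1 with hY | ⟨hYn, hY⟩
  · linarith
  · nlinarith [mul_nonneg (by linarith : (0 : ℝ) ≤ H.edgeSet.ncard - 1)
      (by linarith : (0 : ℝ) ≤ Fintype.card V - 1 - Y.ncard)]
  · nlinarith [mul_nonneg (by linarith : (0 : ℝ) ≤ H.edgeSet.ncard - 1)
      (by linarith : (0 : ℝ) ≤ Fintype.card V - 1 - X.ncard)]
  · nlinarith [mul_nonneg (by linarith : (0 : ℝ) ≤ H.edgeSet.ncard - 1)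
      (by linarith : (0 : ℝ) ≤ Fintype.card V + 1 - X.ncard - Y.ncard)]

theorem induce_compl_connected (h : Strictly2Balanced H) {S : Set V} (hS : S.ncard ≤ 1) :
    (H.induce Sᶜ).Connected := by
  by_contra hc
  have hne : Sᶜ.Nonempty := by
    rw [nonempty_compl]
    rintro rfl
    rw [ncard_univ, Nat.card_eq_fintype_card] at hS
    linarith [h.1]
  obtain ⟨X, Y, hsep, rfl⟩ := exists_isSeparation_of_not_connected_induce hne hc
  exact h.not_isSeparation hS hsep

end Strictly2Balanced

/-- Every strictly 2-balanced graph is 2-connected: it has at least 3 vertices,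
is connected, and remains connected after deleting any single vertex. -/
theorem stmt_2 {V : Type*} [Fintype V] (H : SimpleGraph V)
    (h2b : Strictly2Balanced H) :
    3 ≤ Fintype.card V ∧ H.Connected ∧
      ∀ v : V, (H.induce {u : V | u ≠ v}).Connected := by
  refine ⟨h2b.1, ?_, fun v => h2b.induce_compl_connected (S := {v}) (by simp)⟩
  have h := h2b.induce_compl_connected (S := ∅) (by simp)
  rw [compl_empty] at h
  exact (induceUnivIso H).connected_iff.1 h
end

section
/- If H is strictly 2-balanced and {x,y} is a cutset of H (i.e. one can write V_H = X ∪ Y with X ∩ Y = {x,y}, X ≠ V_H, Y ≠ V_H, and every edge of H lying inside X or inside Y), then xy is not an edge of H. -/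
theorem stmt_3 {V : Type*} [Fintype V] (H : SimpleGraph V)
    (h2b : Strictly2Balanced H) (x y : V) (hxy : x ≠ y) (X Y : Set V)
    (hcover : X ∪ Y = Set.univ) (hinter : X ∩ Y = {x, y})
    (hX : X ≠ Set.univ) (hY : Y ≠ Set.univ)
    (hedges : ∀ a b : V, H.Adj a b → (a ∈ X ∧ b ∈ X) ∨ (a ∈ Y ∧ b ∈ Y)) :
    ¬ H.Adj x y := by
  intro had
  obtain ⟨hn3, he3, hbal⟩ := h2b
  set KX : H.Subgraph := (⊤ : H.Subgraph).induce X with hKX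
  set KY : H.Subgraph := (⊤ : H.Subgraph).induce Y with hKY
  have hxX : x ∈ X := by
    have h : x ∈ X ∩ Y := by rw [hinter]; left; rfl
    exact h.1
  have hyX : y ∈ X := by
    have h : y ∈ X ∩ Y := by rw [hinter]; right; rfl
    exact h.1
  have hxY : x ∈ Y := by
    have h : x ∈ X ∩ Y := by rw [hinter]; left; rfl
    exact h.2
  have hyY : y ∈ Y := by
    have h : y ∈ X ∩ Y := by rw [hinter]; right; rfl
    exact h.2
  -- vertex counts
  have hvsum : X.ncard + Y.ncard = Fintype.card V + 2 := by
    have h := Set.ncard_union_add_ncard_inter X Y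
    rw [hcover, hinter, Set.ncard_univ, Set.ncard_pair hxy, Nat.card_eq_fintype_card] at h
    omega
  -- X and Y have at least 3 vertices
  have hX3 : 3 ≤ X.ncard := by
    by_contra hlt
    have hsub : ({x, y} : Set V) ⊆ X := by
      intro v hv; rcases hv with h | h <;> subst h <;> assumption
    have h2 : 2 ≤ X.ncard := by
      have := Set.ncard_le_ncard hsub (Set.toFinite X)
      rwa [Set.ncard_pair hxy] at this
    have hXeq : X = {x, y} := by
      apply (Set.eq_of_subset_of_ncard_le hsub ?_ (Set.toFinite X)).symm
      rw [Set.ncard_pair hxy]; omega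
    apply hY
    ext v
    simp only [Set.mem_univ, iff_true]
    have hv : v ∈ X ∪ Y := by rw [hcover]; trivial
    rcases hv with h | h
    · rw [hXeq] at h
      rcases h with h | h <;> subst h <;> assumption
    · exact h
  have hY3 : 3 ≤ Y.ncard := by
    by_contra hlt
    have hsub : ({x, y} : Set V) ⊆ Y := by
      intro v hv; rcases hv with h | h <;> subst h <;> assumption
    have h2 : 2 ≤ Y.ncard := by
      have := Set.ncard_le_ncard hsub (Set.toFinite Y)
      rwa [Set.ncard_pair hxy] at this
    have hYeq : Y = {x, y} := by
      apply (Set.eq_of_subset_of_ncard_le hsub ?_ (Set.toFinite Y)).symm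
      rw [Set.ncard_pair hxy]; omega
    apply hX
    ext v
    simp only [Set.mem_univ, iff_true]
    have hv : v ∈ X ∪ Y := by rw [hcover]; trivial
    rcases hv with h | h
    · exact h
    · rw [hYeq] at h
      rcases h with h | h <;> subst h <;> assumption
  -- edge set facts
  have hEunion : KX.edgeSet ∪ KY.edgeSet = H.edgeSet := by
    apply Set.Subset.antisymm
    · exact Set.union_subset KX.edgeSet_subset KY.edgeSet_subset
    · intro e he
      induction e using Sym2.inductionOn with
      | hf a b =>
        rw [SimpleGraph.mem_edgeSet] at he
        rcases hedges a b he with ⟨ha, hb⟩ | ⟨ha, hb⟩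
        · left
          rw [SimpleGraph.Subgraph.mem_edgeSet, hKX]
          exact ⟨ha, hb, he⟩
        · right
          rw [SimpleGraph.Subgraph.mem_edgeSet, hKY]
          exact ⟨ha, hb, he⟩
  have hEinter : KX.edgeSet ∩ KY.edgeSet = {s(x, y)} := by
    ext e
    constructor
    · rintro ⟨h1, h2⟩
      induction e using Sym2.inductionOn with
      | hf a b =>
        rw [SimpleGraph.Subgraph.mem_edgeSet, hKX] at h1
        rw [SimpleGraph.Subgraph.mem_edgeSet, hKY] at h2
        obtain ⟨haX, hbX, hadj⟩ := h1
        obtain ⟨haY, hbY, -⟩ := h2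
        have ha : a ∈ ({x, y} : Set V) := by rw [← hinter]; exact ⟨haX, haY⟩
        have hb : b ∈ ({x, y} : Set V) := by rw [← hinter]; exact ⟨hbX, hbY⟩
        have hab : a ≠ b := hadj.adj_sub.ne
        simp only [Set.mem_singleton_iff, Sym2.eq, Sym2.rel_iff', Prod.mk.injEq,
          Prod.swap_prod_mk]
        rcases ha with ha | ha <;> rcases hb with hb | hb <;>
          subst ha <;> subst hb <;> simp_all
    · rintro rfl
      constructor
      · rw [SimpleGraph.Subgraph.mem_edgeSet, hKX]
        exact ⟨hxX, hyX, by simpa using had⟩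
      · rw [SimpleGraph.Subgraph.mem_edgeSet, hKY]
        exact ⟨hxY, hyY, by simpa using had⟩
  have hesum : KX.edgeSet.ncard + KY.edgeSet.ncard = H.edgeSet.ncard + 1 := by
    have h := Set.ncard_union_add_ncard_inter KX.edgeSet KY.edgeSet
    rw [hEunion, hEinter, Set.ncard_singleton] at h
    omega
  -- the subgraphs are proper
  have hKXne : KX ≠ ⊤ := by
    intro h
    apply hX
    have := congrArg SimpleGraph.Subgraph.verts h
    simpa [hKX] using this
  have hKYne : KY ≠ ⊤ := by
    intro h
    apply hY
    have := congrArg SimpleGraph.Subgraph.verts h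
    simpa [hKY] using this
  have hvX : KX.verts = X := rfl
  have hvY : KY.verts = Y := rfl
  have h1 := hbal KX hKXne (by rw [hvX]; exact hX3)
  have h2 := hbal KY hKYne (by rw [hvY]; exact hY3)
  rw [hvX] at h1
  rw [hvY] at h2
  -- arithmetic
  set n : ℕ := Fintype.card V
  set e : ℕ := H.edgeSet.ncard
  set vX : ℕ := X.ncard
  set vY : ℕ := Y.ncard
  set eX : ℕ := KX.edgeSet.ncard
  set eY : ℕ := KY.edgeSet.ncard
  have hnpos : (0 : ℝ) < (n : ℝ) - 2 := by
    have : (3 : ℝ) ≤ (n : ℝ) := by exact_mod_cast hn3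
    linarith
  have hXpos : (0 : ℝ) < (vX : ℝ) - 2 := by
    have : (3 : ℝ) ≤ (vX : ℝ) := by exact_mod_cast hX3
    linarith
  have hYpos : (0 : ℝ) < (vY : ℝ) - 2 := by
    have : (3 : ℝ) ≤ (vY : ℝ) := by exact_mod_cast hY3
    linarith
  rw [gt_iff_lt, div_lt_div_iff₀ hXpos hnpos] at h1
  rw [gt_iff_lt, div_lt_div_iff₀ hYpos hnpos] at h2
  have hvsum' : (vX : ℝ) + (vY : ℝ) = (n : ℝ) + 2 := by exact_mod_cast hvsum
  have hesum' : (eX : ℝ) + (eY : ℝ) = (e : ℝ) + 1 := by exact_mod_cast hesum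
  nlinarith [h1, h2]
end

section
/- Let H be a strictly 2-balanced graph and let a,b be the endpoints of an edge e of H, with A = {a,b}. Then the pair (A,H) is strictly balanced: S_{A,H} = 1 and S_{B,H} < 1 for every B with A ⊊ B ⊊ V_H, where scalings are computed with p = n^{−(v_H−2)/(e_H−1)} and n > 1. -/
/-- `S_{A,Γ} = p^(e_Γ - e_{Γ[A]}) * n^(v_Γ - |A|)`, the extension scaling. -/
noncomputable def scalingPair {V : Type*} [Fintype V] (n p : ℝ)
    (Γ : SimpleGraph V) (A : Set V) : ℝ :=
  p ^ (Γ.edgeSet.ncard - (Γ.induce A).edgeSet.ncard) *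
    n ^ (Fintype.card V - A.ncard)

/-!
Write `p = n ^ r` with `r = -(v_H - 2)/(e_H - 1)`. Then `S_{B,H} = n ^ x_B` where, after clearing
the denominator `e_H - 1 > 0`, the exponent `x_B` has the sign of
`(v_H - 2)(e_{H[B]} - 1) - (|B| - 2)(e_H - 1)`. For `B = {a, b}` this vanishes, and for
`{a, b} ⊊ B ⊊ V_H` it is negative precisely because `H[B]` has smaller 2-density than `H`.
-/

namespace SimpleGraph

variable {V : Type*}

lemma ncard_edgeSet_induce_eq_subgraph (H : SimpleGraph V) (B : Set V) :
    (H.induce B).edgeSet.ncard = ((⊤ : H.Subgraph).induce B).edgeSet.ncard := by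
  rw [induce_eq_coe_induce_top, ← Subgraph.image_coe_edgeSet_coe,
    Set.ncard_image_of_injective _ (Sym2.map.injective Subtype.val_injective)]
  rfl

lemma ncard_edgeSet_induce_le [Finite V] (H : SimpleGraph V) (B : Set V) :
    (H.induce B).edgeSet.ncard ≤ H.edgeSet.ncard := by
  rw [ncard_edgeSet_induce_eq_subgraph]
  exact Set.ncard_le_ncard (Subgraph.edgeSet_subset _) H.edgeSet.toFinite

lemma ncard_edgeSet_induce_pair {H : SimpleGraph V} {a b : V} (hab : H.Adj a b) :
    (H.induce {a, b}).edgeSet.ncard = 1 := by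
  rw [ncard_edgeSet_induce_eq_subgraph, ← Subgraph.subgraphOfAdj_eq_induce hab,
    edgeSet_subgraphOfAdj, Set.ncard_singleton]

end SimpleGraph

section

variable {V : Type*} [Fintype V]

lemma Strictly2Balanced.density_induce_lt {H : SimpleGraph V} (h : Strictly2Balanced H)
    {B : Set V} (hB : B ≠ Set.univ) (hB3 : 3 ≤ B.ncard) :
    (((H.induce B).edgeSet.ncard : ℝ) - 1) / ((B.ncard : ℝ) - 2) <
      ((H.edgeSet.ncard : ℝ) - 1) / ((Fintype.card V : ℝ) - 2) := by
  rw [SimpleGraph.ncard_edgeSet_induce_eq_subgraph]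
  refine h.2.2 _ (fun htop => hB ?_) hB3
  simpa using congrArg SimpleGraph.Subgraph.verts htop

lemma scalingPair_rpow {n : ℝ} (hn : 0 < n) (r : ℝ) (Γ : SimpleGraph V) (A : Set V) :
    scalingPair n (n ^ r) Γ A =
      n ^ (r * ((Γ.edgeSet.ncard : ℝ) - (Γ.induce A).edgeSet.ncard) +
        ((Fintype.card V : ℝ) - A.ncard)) := by
  have hA : A.ncard ≤ Fintype.card V := by simpa using Set.ncard_le_card A
  rw [scalingPair, ← Nat.cast_sub (SimpleGraph.ncard_edgeSet_induce_le Γ A), ← Nat.cast_sub hA,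
    ← Real.rpow_natCast, ← Real.rpow_natCast, ← Real.rpow_mul hn.le, ← Real.rpow_add hn]

lemma scaling_exponent_eq {e v f m : ℝ} (he : e ≠ 1) :
    -((v - 2) / (e - 1)) * (e - f) + (v - m) =
      ((v - 2) * (f - 1) - (m - 2) * (e - 1)) / (e - 1) := by
  field_simp [sub_ne_zero.mpr he]
  ring

end

theorem stmt_5 {V : Type*} [Fintype V] (H : SimpleGraph V)
    (h2b : Strictly2Balanced H) (n : ℝ) (hn : 1 < n) (p : ℝ)
    (hp : p = n ^ (-(((Fintype.card V : ℝ) - 2) / ((H.edgeSet.ncard : ℝ) - 1))))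
    (a b : V) (hab : H.Adj a b) :
    scalingPair n p H {a, b} = 1 ∧
    ∀ B : Set V, ({a, b} : Set V) ⊂ B → B ⊂ Set.univ →
      scalingPair n p H B < 1 := by
  have he : (1 : ℝ) < H.edgeSet.ncard := by exact_mod_cast (by omega : 1 < 3).trans_le h2b.2.1
  have hv : (2 : ℝ) < Fintype.card V := by exact_mod_cast h2b.1
  subst hp
  simp only [scalingPair_rpow (zero_lt_one.trans hn), scaling_exponent_eq he.ne']
  refine ⟨?_, fun B hAB hBU => ?_⟩
  · rw [SimpleGraph.ncard_edgeSet_induce_pair hab, Set.ncard_pair hab.ne]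
    norm_num
  · have hB3 : 3 ≤ B.ncard := by
      have := Set.ncard_lt_ncard hAB B.toFinite
      rw [Set.ncard_pair hab.ne] at this
      omega
    have hB2 : (2 : ℝ) < B.ncard := by exact_mod_cast hB3
    have hdens := h2b.density_induce_lt hBU.ne hB3
    rw [div_lt_div_iff₀ (by linarith) (by linarith)] at hdens
    exact Real.rpow_lt_one_of_one_lt_of_neg hn (div_neg_of_neg_of_pos (by linarith) (by linarith))
end

section
/- Let H be strictly 2-balanced with p = n^{−(v_H−2)/(e_H−1)}, n > 1. Let J be a subgraph of H with e_J ≤ e_H − 2 and V_J = V_H, and let A = {u,v} where uv is an edge of H not contained in J. Then (A,J) is strictly dense: S_{A,J[B]} > 1 for every B with A ⊊ B ⊆ V_J. -/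
/-- `S_{A,Γ[B]}`, the extension scaling within the induced subgraph on `B`. -/
noncomputable def scalingInd {V : Type*} [Fintype V] (n p : ℝ)
    (Γ : SimpleGraph V) (A B : Set V) : ℝ :=
  p ^ ((Γ.induce B).edgeSet.ncard - (Γ.induce A).edgeSet.ncard) *
    n ^ (B.ncard - A.ncard)

namespace SimpleGraph

variable {V : Type*} {G J H : SimpleGraph V}

lemma ncard_edgeSet_induce_eq_induce_top (s : Set V) :
    (G.induce s).edgeSet.ncard = ((⊤ : G.Subgraph).induce s).edgeSet.ncard := by
  rw [induce_eq_coe_induce_top, ← Subgraph.image_coe_edgeSet_coe ((⊤ : G.Subgraph).induce s),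
    Set.ncard_image_of_injective _ (Sym2.map.injective Subtype.val_injective)]
  rfl

lemma ncard_edgeSet_induce_le_s8 [Finite V] (s : Set V) :
    (G.induce s).edgeSet.ncard ≤ G.edgeSet.ncard := by
  rw [ncard_edgeSet_induce_eq_induce_top]
  exact Set.ncard_le_ncard (Subgraph.edgeSet_subset _) (Set.toFinite _)

lemma edgeSet_induce_pair_eq_empty {u v : V} (huv : ¬ G.Adj u v) :
    (G.induce {u, v}).edgeSet = ∅ := by
  refine Set.eq_empty_of_forall_notMem fun e he => ?_
  induction e using Sym2.ind with
  | h a b =>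
    have hab : G.Adj a b := he
    rcases a.2 with ha | ha <;> rcases b.2 with hb | hb <;> rw [ha, hb] at hab
    exacts [G.irrefl hab, huv hab, huv hab.symm, G.irrefl hab]

lemma exists_subgraph_verts_eq_ncard_edgeSet_eq [Finite V] (hJH : J ≤ H) {u v : V}
    (huv : H.Adj u v) (huvJ : ¬ J.Adj u v) {B : Set V} (hB : {u, v} ⊆ B) :
    ∃ K : H.Subgraph, K.verts = B ∧ K.edgeSet.ncard = (J.induce B).edgeSet.ncard + 1 := by
  refine ⟨(toSubgraph J hJH).induce B ⊔ H.subgraphOfAdj huv, Set.union_eq_left.mpr hB, ?_⟩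
  have huvE : s(u, v) ∉ ((toSubgraph J hJH).induce B).edgeSet := fun h => huvJ h.2.2
  rw [Subgraph.edgeSet_sup, edgeSet_subgraphOfAdj, Set.union_singleton,
    Set.ncard_insert_of_notMem huvE (Set.toFinite _), ncard_edgeSet_induce_eq_induce_top]
  -- both sides are `Sym2.fromRel` of the relation `x ∈ B ∧ y ∈ B ∧ J.Adj x y`
  rfl

end SimpleGraph

open SimpleGraph

lemma Strictly2Balanced.mul_ncard_edgeSet_sub_one_lt {V : Type*} [Fintype V]
    {H : SimpleGraph V} (h2b : Strictly2Balanced H) {K : H.Subgraph} (hK : K ≠ ⊤)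
    (hK3 : 3 ≤ K.verts.ncard) :
    ((Fintype.card V : ℝ) - 2) / ((H.edgeSet.ncard : ℝ) - 1) * ((K.edgeSet.ncard : ℝ) - 1) <
      (K.verts.ncard : ℝ) - 2 := by
  obtain ⟨hV3, hE3, hdense⟩ := h2b
  have hV : (0 : ℝ) < (Fintype.card V : ℝ) - 2 := by
    have : (3 : ℝ) ≤ Fintype.card V := by exact_mod_cast hV3
    linarith
  have hE : (0 : ℝ) < (H.edgeSet.ncard : ℝ) - 1 := by
    have : (3 : ℝ) ≤ H.edgeSet.ncard := by exact_mod_cast hE3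
    linarith
  have hKV : (0 : ℝ) < (K.verts.ncard : ℝ) - 2 := by
    have : (3 : ℝ) ≤ K.verts.ncard := by exact_mod_cast hK3
    linarith
  have h := (div_lt_div_iff₀ hKV hV).mp (hdense K hK hK3)
  rw [div_mul_eq_mul_div, div_lt_iff₀ hE]
  linarith

lemma one_lt_rpow_neg_pow_mul_pow {n θ : ℝ} (hn : 1 < n) {k m : ℕ} (h : θ * k < m) :
    1 < (n ^ (-θ)) ^ k * n ^ m := by
  have hn0 : 0 < n := zero_lt_one.trans hn
  rw [← Real.rpow_natCast (n ^ (-θ)), ← Real.rpow_mul hn0.le, ← Real.rpow_natCast n m,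
    ← Real.rpow_add hn0]
  exact Real.one_lt_rpow hn (by linarith)

theorem stmt_8 {V : Type*} [Fintype V] (H : SimpleGraph V)
    (h2b : Strictly2Balanced H) (n : ℝ) (hn : 1 < n) (p : ℝ)
    (hp : p = n ^ (-(((Fintype.card V : ℝ) - 2) / ((H.edgeSet.ncard : ℝ) - 1))))
    (J : SimpleGraph V) (hJH : J ≤ H)
    (heJ : J.edgeSet.ncard + 2 ≤ H.edgeSet.ncard)
    (u v : V) (huv : H.Adj u v) (huvJ : ¬ J.Adj u v) :
    ∀ B : Set V, ({u, v} : Set V) ⊂ B → 1 < scalingInd n p J {u, v} B := by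
  intro B hB
  have hB3 : 3 ≤ B.ncard := by
    have := Set.ncard_lt_ncard hB B.toFinite
    rw [Set.ncard_pair huv.ne] at this
    omega
  obtain ⟨K, hKV, hKE⟩ := exists_subgraph_verts_eq_ncard_edgeSet_eq hJH huv huvJ hB.subset
  have hK : K ≠ ⊤ := by
    rintro rfl
    rw [Subgraph.edgeSet_top] at hKE
    have := ncard_edgeSet_induce_le_s8 (G := J) B
    omega
  have hdense := h2b.mul_ncard_edgeSet_sub_one_lt hK (hKV ▸ hB3)
  rw [hKV, hKE, Nat.cast_add_one, add_sub_cancel_right] at hdense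
  rw [scalingInd, edgeSet_induce_pair_eq_empty huvJ, Set.ncard_empty, Set.ncard_pair huv.ne,
    Nat.sub_zero, hp]
  exact one_lt_rpow_neg_pow_mul_pow hn (by rw [Nat.cast_sub (by omega)]; push_cast; exact hdense)
end

section
/- Let s ≥ 6, H = K_s, and p = n^{−2/(s+1)} with n > 1. For any two distinct edges uv, xy of H, set H⁻ = H ∖ uv. Then the pair ({x,y}, H⁻) is strictly balanced: S_{xy,H⁻} = p^{−1} and S_{xy,H⁻[B]} > p^{−1} for all B with {x,y} ⊊ B ⊊ V_H. In particular S_{xy,H⁻[B]} ≥ p²n > p^{−1} for such B. -/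
namespace SimpleGraph

variable {V : Type*}

lemma induce_deleteEdges (G : SimpleGraph V) (S : Set (Sym2 V)) (B : Set V) :
    (G.deleteEdges S).induce B = (G.induce B).deleteEdges (Sym2.map (↑) ⁻¹' S) := by
  ext a b
  simp

lemma ncard_edgeSet_top [Finite V] :
    (⊤ : SimpleGraph V).edgeSet.ncard = (Nat.card V).choose 2 := by
  classical
  have := Fintype.ofFinite V
  rw [Nat.card_eq_fintype_card, ← card_edgeFinset_top_eq_card_choose_two, edgeFinset,
    Set.ncard_eq_toFinset_card']

lemma ncard_edgeSet_induce_univ (G : SimpleGraph V) :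
    (G.induce Set.univ).edgeSet.ncard = G.edgeSet.ncard := by
  rw [← Nat.card_coe_set_eq, ← Nat.card_coe_set_eq]
  exact Nat.card_congr G.induceUnivIso.mapEdgeSet

open scoped Classical in
lemma ncard_edgeSet_induce_top_deleteEdges [Finite V] {u v : V} (huv : u ≠ v) (B : Set V) :
    (((⊤ : SimpleGraph V).deleteEdges {s(u, v)}).induce B).edgeSet.ncard =
      B.ncard.choose 2 - if u ∈ B ∧ v ∈ B then 1 else 0 := by
  have hinj : (Sym2.map ((↑) : B → V)).Injective := Sym2.map.injective Subtype.val_injective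
  rw [induce_deleteEdges, induce_top, edgeSet_deleteEdges, ← Nat.card_coe_set_eq B,
    ← ncard_edgeSet_top]
  split_ifs with h
  · obtain ⟨hu, hv⟩ := h
    have hD : Sym2.map ((↑) : B → V) ⁻¹' {s(u, v)} = {s(⟨u, hu⟩, ⟨v, hv⟩)} := by
      rw [← hinj.preimage_image {s(⟨u, hu⟩, ⟨v, hv⟩)}, Set.image_singleton, Sym2.map_mk]
    rw [hD, Set.ncard_sdiff_singleton_of_mem (by simpa using huv)]
  · have hD : Sym2.map ((↑) : B → V) ⁻¹' {s(u, v)} = ∅ := by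
      refine Set.preimage_singleton_eq_empty.mpr ?_
      rintro ⟨e, he⟩
      have key : ∀ w ∈ s(u, v), w ∈ B := by
        rintro w hw
        rw [← he, Sym2.mem_map] at hw
        obtain ⟨a, -, rfl⟩ := hw
        exact a.2
      exact h ⟨key u (Sym2.mem_mk_left u v), key v (Sym2.mem_mk_right u v)⟩
    rw [hD, Set.sdiff_empty, Nat.sub_zero]

end SimpleGraph

open SimpleGraph

lemma scalingPair_eq_scalingInd_univ {V : Type*} [Fintype V] (n p : ℝ) (Γ : SimpleGraph V)
    (A : Set V) : scalingPair n p Γ A = scalingInd n p Γ A Set.univ := by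
  rw [scalingPair, scalingInd, ncard_edgeSet_induce_univ, Set.ncard_univ, Nat.card_eq_fintype_card]

lemma rpow_neg_pow_mul_pow {n : ℝ} (hn : 0 < n) (t : ℝ) (k m : ℕ) :
    (n ^ (-t)) ^ k * n ^ m = n ^ (-t * k + m) := by
  rw [← Real.rpow_natCast, ← Real.rpow_mul hn.le, ← Real.rpow_natCast n m,
    ← Real.rpow_add hn]

/-- The exponent of `n` in `S_{xy,H⁻[B]}` when `p = n ^ (-t)`, `|B| = b` and `H⁻[B]` misses `d`
edges. -/
noncomputable def pairExponent (t b d : ℝ) : ℝ := -t * (b * (b - 1) / 2 - d - 1) + (b - 2)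

open scoped Classical in
lemma scalingInd_top_deleteEdges_pair {V : Type*} [Fintype V] {n : ℝ} (hn : 0 < n) (t : ℝ)
    {u v x y : V} (huv : u ≠ v) (hxy : x ≠ y) (hne : s(u, v) ≠ s(x, y)) {B : Set V}
    (hB : 3 ≤ B.ncard) :
    scalingInd n (n ^ (-t)) ((⊤ : SimpleGraph V).deleteEdges {s(u, v)}) {x, y} B =
      n ^ pairExponent t B.ncard (if u ∈ B ∧ v ∈ B then 1 else 0) := by
  have hpair : ¬(u ∈ ({x, y} : Set V) ∧ v ∈ ({x, y} : Set V)) := by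
    rintro ⟨hu | hu, hv | hv⟩ <;> subst hu hv
    exacts [huv rfl, hne rfl, hne Sym2.eq_swap, huv rfl]
  have hchoose : 3 ≤ B.ncard.choose 2 :=
    (Nat.choose_le_choose 2 hB).trans' (by decide)
  rw [scalingInd, ncard_edgeSet_induce_top_deleteEdges huv,
    ncard_edgeSet_induce_top_deleteEdges huv, if_neg hpair, Set.ncard_pair hxy, Nat.choose_self,
    Nat.sub_zero, rpow_neg_pow_mul_pow hn, pairExponent]
  congr 2
  · split_ifs <;> rw [Nat.cast_sub (by omega), Nat.cast_sub (by omega), Nat.cast_choose_two] <;>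
      norm_num
  · push_cast [Nat.cast_sub (by omega : 2 ≤ B.ncard)]; ring

lemma pairExponent_self (s : ℝ) (hs : 0 < s + 1) :
    pairExponent (2 / (s + 1)) s 1 = 2 / (s + 1) := by
  rw [pairExponent]
  field_simp
  ring

lemma one_sub_two_mul_le_pairExponent {s b d : ℝ} (hb : 3 ≤ b) (hbs : b + 1 ≤ s)
    (hd : 0 ≤ d) : 1 - 2 * (2 / (s + 1)) ≤ pairExponent (2 / (s + 1)) b d := by
  have hs : 0 < s + 1 := by linarith
  have hdiff : pairExponent (2 / (s + 1)) b d - (1 - 2 * (2 / (s + 1))) =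
      ((b - 3) * (s - 1 - b) + 2 * d) / (s + 1) := by
    rw [pairExponent]
    field_simp
    ring
  have : 0 ≤ ((b - 3) * (s - 1 - b) + 2 * d) / (s + 1) := by
    apply div_nonneg _ hs.le
    nlinarith
  linarith

lemma two_div_lt_one_sub_two_mul {s : ℝ} (hs : 6 ≤ s) :
    2 / (s + 1) < 1 - 2 * (2 / (s + 1)) := by
  have hdiff : 1 - 2 * (2 / (s + 1)) - 2 / (s + 1) = (s - 5) / (s + 1) := by
    field_simp
    ring
  have : 0 < (s - 5) / (s + 1) := div_pos (by linarith) (by linarith)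
  linarith

theorem stmt_13 (s : ℕ) (hs : 6 ≤ s) (n : ℝ) (hn : 1 < n) (p : ℝ)
    (hp : p = n ^ (-(2 / ((s : ℝ) + 1))))
    (u v x y : Fin s) (huv : u ≠ v) (hxy : x ≠ y) (hne : s(u, v) ≠ s(x, y))
    (Hm : SimpleGraph (Fin s))
    (hHm : Hm = (⊤ : SimpleGraph (Fin s)).deleteEdges {s(u, v)}) :
    scalingPair n p Hm {x, y} = p⁻¹ ∧
    ∀ B : Set (Fin s), ({x, y} : Set (Fin s)) ⊂ B → B ⊂ Set.univ →
      p⁻¹ < scalingInd n p Hm {x, y} B ∧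
      p ^ 2 * n ≤ scalingInd n p Hm {x, y} B ∧
      p⁻¹ < p ^ 2 * n := by
  classical
  subst hp hHm
  have hn0 : 0 < n := zero_lt_one.trans hn
  have hs' : (6 : ℝ) ≤ s := by exact_mod_cast hs
  have hinv : (n ^ (-(2 / ((s : ℝ) + 1))))⁻¹ = n ^ (2 / ((s : ℝ) + 1)) := by
    rw [Real.rpow_neg hn0.le, inv_inv]
  have hsq : (n ^ (-(2 / ((s : ℝ) + 1)))) ^ 2 * n = n ^ (1 - 2 * (2 / ((s : ℝ) + 1))) := by
    have := rpow_neg_pow_mul_pow hn0 (2 / ((s : ℝ) + 1)) 2 1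
    rw [pow_one] at this
    rw [this]
    congr 1
    push_cast
    ring
  refine ⟨?_, fun B hxyB hBuniv => ?_⟩
  · rw [scalingPair_eq_scalingInd_univ, scalingInd_top_deleteEdges_pair hn0 _ huv hxy hne
      (by rw [Set.ncard_univ, Nat.card_fin]; omega), if_pos ⟨Set.mem_univ u, Set.mem_univ v⟩,
      hinv]
    simp only [Set.ncard_univ, Nat.card_fin]
    rw [pairExponent_self _ (by linarith)]
  · have hb : 3 ≤ B.ncard := by
      have := Set.ncard_lt_ncard hxyB
      rw [Set.ncard_pair hxy] at this
      omega
    have hbs : B.ncard + 1 ≤ s := by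
      simpa using Set.ncard_lt_ncard hBuniv
    have hlt := Real.rpow_lt_rpow_of_exponent_lt hn (two_div_lt_one_sub_two_mul hs')
    have hle := Real.rpow_le_rpow_of_exponent_le hn.le
      (one_sub_two_mul_le_pairExponent (s := s) (b := B.ncard)
        (d := if u ∈ B ∧ v ∈ B then 1 else 0)
        (by exact_mod_cast hb) (by exact_mod_cast hbs) (by split_ifs <;> norm_num))
    rw [scalingInd_top_deleteEdges_pair hn0 _ huv hxy hne hb, hinv, hsq]
    exact ⟨hlt.trans_le hle, hle, hlt⟩
end

section
/- Azuma-type bound for bounded submartingales: suppose 0 < η ≤ N/10, m ≥ 1 is an integer, a > 0, and A_0, A_1, …, A_m is an (η,N)-bounded submartingale, meaning E(A_{i+1} | F_i) ≥ A_i and A_i − η ≤ A_{i+1} ≤ A_i + N almost surely for all i. Then P(A_m ≤ A_0 − a) ≤ exp(−a²/(3ηmN)). -/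
/-!
Chernoff's method. The increments `A i - A (i + 1)` lie in `[-N, η]` and have nonpositive
conditional mean, so by convexity their conditional moment generating function at `t ≥ 0` is at
most `α t`, the value at `0` of the chord of `x ↦ exp (t x)` over `[-N, η]`. The tower property
gives `E exp (t (A 0 - A m)) ≤ (α t) ^ m`, and a third-order Taylor bound gives
`α t ≤ exp (3ηN t² / 4)` as long as `tN ≤ 2/3`. Markov's inequality at `t = 2a / (3mηN)` then
gives the claim; `tN ≤ 2/3` means `a ≤ mη`, and for `a > mη` the event is null since
`A 0 - A m ≤ mη`.
-/

open MeasureTheory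

theorem exp_le_quadratic_add_abs_cube {x : ℝ} (hx : |x| ≤ 1) :
    Real.exp x ≤ 1 + x + x ^ 2 / 2 + 2 * |x| ^ 3 / 9 := by
  have h := Real.exp_bound hx (n := 3) (by norm_num)
  norm_num [Finset.sum_range_succ, Nat.factorial] at h
  linarith [(abs_sub_le_iff.1 h).1]

theorem exp_mul_le_chord {l u t x : ℝ} (hlu : l < u) (hx : x ∈ Set.Icc l u) :
    Real.exp (t * x) ≤ ((u - x) * Real.exp (t * l) + (x - l) * Real.exp (t * u)) / (u - l) := by
  have hul : u - l ≠ 0 := (sub_pos.2 hlu).ne'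
  have h := convexOn_exp.2 (Set.mem_univ (t * l)) (Set.mem_univ (t * u))
    (div_nonneg (sub_nonneg.2 hx.2) (sub_pos.2 hlu).le)
    (div_nonneg (sub_nonneg.2 hx.1) (sub_pos.2 hlu).le) (by field_simp; ring)
  simp only [smul_eq_mul] at h
  calc Real.exp (t * x) = Real.exp ((u - x) / (u - l) * (t * l) + (x - l) / (u - l) * (t * u)) := by
        congr 1; field_simp; ring
    _ ≤ _ := h
    _ = _ := by ring

/-- The value at `0` of the chord of `x ↦ exp (t * x)` over `[l, u]`. -/
noncomputable def expChordZero (l u t : ℝ) : ℝ :=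
  (u * Real.exp (t * l) - l * Real.exp (t * u)) / (u - l)

theorem expChordZero_nonneg {l u t : ℝ} (hl : l ≤ 0) (hu : 0 ≤ u) : 0 ≤ expChordZero l u t := by
  unfold expChordZero
  have := mul_nonneg (neg_nonneg.2 hl) (Real.exp_pos (t * u)).le
  exact div_nonneg (by nlinarith [Real.exp_pos (t * l)]) (by linarith)

theorem expChordZero_le_exp {η N t : ℝ} (hη : 0 < η) (hηN : η ≤ N / 10) (ht : 0 ≤ t)
    (htN : t * N ≤ 2 / 3) :
    expChordZero (-N) η t ≤ Real.exp (3 * η * N * t ^ 2 / 4) := by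
  have hN : 0 < N := by linarith
  have htη : t * η ≤ t * N := by nlinarith
  have hneg := exp_le_quadratic_add_abs_cube (x := t * -N)
    (by rw [abs_of_nonpos (by nlinarith)]; linarith)
  have hpos := exp_le_quadratic_add_abs_cube (x := t * η)
    (by rw [abs_of_nonneg (by positivity)]; linarith)
  rw [abs_of_nonpos (by nlinarith)] at hneg
  rw [abs_of_nonneg (by positivity)] at hpos
  have hquad := Real.add_one_le_exp (3 * η * N * t ^ 2 / 4)
  rw [expChordZero, div_le_iff₀ (by linarith)]
  have hcubic : 2 * t * (N ^ 2 + η ^ 2) / 9 ≤ (η + N) / 4 := by nlinarith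
  nlinarith [mul_le_mul_of_nonneg_left hneg hη.le, mul_le_mul_of_nonneg_left hpos hN.le,
    mul_le_mul_of_nonneg_left hquad (by linarith : (0:ℝ) ≤ η + N),
    mul_le_mul_of_nonneg_left hcubic (by positivity : (0:ℝ) ≤ η * N * t ^ 2)]

section

open ProbabilityTheory

variable {Ω : Type*} {m0 : MeasurableSpace Ω} {μ : Measure Ω}

theorem integrable_exp_mul_of_ae_le [IsFiniteMeasure μ] {X : Ω → ℝ} {c t : ℝ}
    (hX : AEStronglyMeasurable X μ) (hXc : ∀ᵐ ω ∂μ, X ω ≤ c) (ht : 0 ≤ t) :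
    Integrable (fun ω => Real.exp (t * X ω)) μ := by
  refine Integrable.mono' (integrable_const (Real.exp (t * c)))
    (Real.continuous_exp.comp_aestronglyMeasurable (hX.const_mul t)) ?_
  filter_upwards [hXc] with ω hω
  rw [Real.norm_eq_abs, abs_of_pos (Real.exp_pos _)]
  exact Real.exp_le_exp.2 (mul_le_mul_of_nonneg_left hω ht)

theorem condExp_sub_nonpos_of_le_condExp [IsFiniteMeasure μ] {m : MeasurableSpace Ω}
    (hm : m ≤ m0) {f g : Ω → ℝ} (hf : StronglyMeasurable[m] f) (hfi : Integrable f μ)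
    (hgi : Integrable g μ) (hfg : f ≤ᵐ[μ] μ[g|m]) :
    μ[f - g|m] ≤ᵐ[μ] 0 := by
  filter_upwards [condExp_sub hfi hgi m, hfg] with ω hsub hle
  rw [hsub, Pi.sub_apply, condExp_of_stronglyMeasurable hm hf hfi]
  exact sub_nonpos.2 hle

theorem condExp_exp_mul_le_expChordZero [IsFiniteMeasure μ] {m : MeasurableSpace Ω}
    (hm : m ≤ m0) {X : Ω → ℝ} {l u t : ℝ} (hX : Integrable X μ)
    (hXb : ∀ᵐ ω ∂μ, X ω ∈ Set.Icc l u) (hXc : μ[X|m] ≤ᵐ[μ] 0) (hlu : l < u) (ht : 0 ≤ t) :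
    μ[fun ω => Real.exp (t * X ω)|m] ≤ᵐ[μ] fun _ => expChordZero l u t := by
  set β := (Real.exp (t * u) - Real.exp (t * l)) / (u - l)
  have hβ : 0 ≤ β := div_nonneg (sub_nonneg.2 (Real.exp_le_exp.2 (by nlinarith)))
    (sub_pos.2 hlu).le
  have hchord : (fun ω => Real.exp (t * X ω)) ≤ᵐ[μ] (fun _ => expChordZero l u t) + β • X := by
    filter_upwards [hXb] with ω hω
    refine (exp_mul_le_chord hlu hω).trans_eq ?_
    simp only [Pi.add_apply, Pi.smul_apply, smul_eq_mul, expChordZero, β]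
    field_simp [(sub_pos.2 hlu).ne']
    ring
  have hint : Integrable (fun ω => Real.exp (t * X ω)) μ :=
    integrable_exp_mul_of_ae_le hX.aestronglyMeasurable (hXb.mono fun _ h => h.2) ht
  filter_upwards [condExp_mono hint ((integrable_const _).add (hX.smul β)) hchord,
    condExp_add (integrable_const (expChordZero l u t)) (hX.smul β) m,
    condExp_smul β X m, hXc] with ω hmono hadd hsmul hneg
  rw [hadd, Pi.add_apply, condExp_const hm, hsmul] at hmono
  simp only [Pi.smul_apply, smul_eq_mul, Pi.zero_apply] at hmono hneg
  nlinarith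

theorem integral_mul_le_of_condExp_le [IsFiniteMeasure μ] {m : MeasurableSpace Ω}
    (hm : m ≤ m0) {Y Z : Ω → ℝ} {c : ℝ} (hY : StronglyMeasurable[m] Y) (hY0 : 0 ≤ᵐ[μ] Y)
    (hYi : Integrable Y μ) (hZ : Integrable Z μ) (hYZ : Integrable (Y * Z) μ)
    (hZc : μ[Z|m] ≤ᵐ[μ] fun _ => c) :
    ∫ ω, (Y * Z) ω ∂μ ≤ c * ∫ ω, Y ω ∂μ := by
  have hpull := condExp_mul_of_stronglyMeasurable_left hY hYZ hZ
  calc ∫ ω, (Y * Z) ω ∂μ = ∫ ω, (μ[Y * Z|m]) ω ∂μ := (integral_condExp hm).symm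
    _ = ∫ ω, (Y * μ[Z|m]) ω ∂μ := integral_congr_ae hpull
    _ ≤ ∫ ω, c * Y ω ∂μ := by
      refine integral_mono_ae (integrable_condExp.congr hpull) (hYi.const_mul c) ?_
      filter_upwards [hZc, hY0] with ω hc hy
      simp only [Pi.mul_apply, Pi.zero_apply] at hc hy ⊢
      nlinarith
    _ = c * ∫ ω, Y ω ∂μ := integral_const_mul c _

variable {ℱ : Filtration ℕ m0} {A : ℕ → Ω → ℝ} {η N : ℝ}

theorem ae_sub_le_mul_of_ae_sub_le {m : ℕ} (h : ∀ i < m, ∀ᵐ ω ∂μ, A i ω - η ≤ A (i + 1) ω) :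
    ∀ᵐ ω ∂μ, A 0 ω - A m ω ≤ m * η := by
  induction m with
  | zero => simp
  | succ m ih =>
    filter_upwards [ih fun i hi => h i (hi.trans m.lt_succ_self), h m m.lt_succ_self]
      with ω hprev hstep
    push_cast
    linarith

theorem mgf_sub_le_expChordZero_pow [IsProbabilityMeasure μ] {m : ℕ} {t : ℝ}
    (hadapted : Adapted ℱ A) (hint : ∀ i, Integrable (A i) μ)
    (hbdd : ∀ i < m, ∀ᵐ ω ∂μ, A i ω - η ≤ A (i + 1) ω ∧ A (i + 1) ω ≤ A i ω + N)
    (hsub : ∀ i < m, A i ≤ᵐ[μ] μ[A (i + 1) | ℱ i]) (hη : 0 < η) (hN : 0 ≤ N) (ht : 0 ≤ t) :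
    mgf (fun ω => A 0 ω - A m ω) μ t ≤ expChordZero (-N) η t ^ m := by
  induction m with
  | zero => simp [mgf]
  | succ m ih =>
    have hlt := m.lt_succ_self
    set Y := fun ω => Real.exp (t * (A 0 ω - A m ω))
    set Z := fun ω => Real.exp (t * (A m - A (m + 1)) ω)
    have hYZ : Y * Z = fun ω => Real.exp (t * (A 0 ω - A (m + 1) ω)) := by
      funext ω
      simp only [Y, Z, Pi.mul_apply, Pi.sub_apply, ← Real.exp_add]
      ring_nf
    have hYm : StronglyMeasurable[ℱ m] Y :=
      ((((hadapted 0).mono (ℱ.mono m.zero_le) le_rfl).sub (hadapted m)).const_mul t).exp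
        |>.stronglyMeasurable
    have hYi : ∀ k ≤ m + 1, Integrable (fun ω => Real.exp (t * (A 0 ω - A k ω))) μ :=
      fun k hk => integrable_exp_mul_of_ae_le ((hint 0).sub (hint k)).aestronglyMeasurable
        (ae_sub_le_mul_of_ae_sub_le fun i hi => (hbdd i (hi.trans_le hk)).mono fun _ h => h.1) ht
    have hinc : ∀ᵐ ω ∂μ, (A m - A (m + 1)) ω ∈ Set.Icc (-N) η :=
      (hbdd m hlt).mono fun ω h =>
        ⟨by simp only [Pi.sub_apply]; linarith [h.2], by simp only [Pi.sub_apply]; linarith [h.1]⟩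
    have hZi : Integrable Z μ := integrable_exp_mul_of_ae_le
      ((hint m).sub (hint (m + 1))).aestronglyMeasurable (hinc.mono fun _ h => h.2) ht
    have hZc : μ[Z|ℱ m] ≤ᵐ[μ] fun _ => expChordZero (-N) η t :=
      condExp_exp_mul_le_expChordZero (ℱ.le m) ((hint m).sub (hint (m + 1))) hinc
        (condExp_sub_nonpos_of_le_condExp (ℱ.le m) (hadapted m).stronglyMeasurable (hint m)
          (hint (m + 1)) (hsub m hlt)) (by linarith) ht
    calc mgf (fun ω => A 0 ω - A (m + 1) ω) μ t = ∫ ω, (Y * Z) ω ∂μ := by rw [hYZ]; rfl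
      _ ≤ expChordZero (-N) η t * mgf (fun ω => A 0 ω - A m ω) μ t :=
        integral_mul_le_of_condExp_le (ℱ.le m) hYm (ae_of_all _ fun _ => (Real.exp_pos _).le)
          (hYi m m.le_succ) hZi (hYZ ▸ hYi (m + 1) le_rfl) hZc
      _ ≤ expChordZero (-N) η t * expChordZero (-N) η t ^ m := by
        gcongr
        · exact expChordZero_nonneg (by linarith) hη.le
        · exact ih (fun i hi => hbdd i (hi.trans hlt)) fun i hi => hsub i (hi.trans hlt)
      _ = expChordZero (-N) η t ^ (m + 1) := by ring

end

theorem stmt_15_general {Ω : Type*} {m0 : MeasurableSpace Ω} (μ : Measure Ω)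
    [IsProbabilityMeasure μ] (ℱ : Filtration ℕ m0)
    (A : ℕ → Ω → ℝ) (m : ℕ) (η N a : ℝ)
    (hη : 0 < η) (hηN : η ≤ N / 10) (ha : 0 < a)
    (hadapted : Adapted ℱ A)
    (hint : ∀ i, Integrable (A i) μ)
    (hbdd : ∀ i < m, ∀ᵐ ω ∂μ, A i ω - η ≤ A (i + 1) ω ∧ A (i + 1) ω ≤ A i ω + N)
    (hsub : ∀ i < m, A i ≤ᵐ[μ] μ[A (i + 1) | ℱ i]) :
    (μ {ω | A m ω ≤ A 0 ω - a}).toReal ≤ Real.exp (-a ^ 2 / (3 * η * m * N)) := by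
  have hN : 0 < N := by linarith
  have hdrift := ae_sub_le_mul_of_ae_sub_le fun i hi => (hbdd i hi).mono fun _ h => h.1
  rcases lt_or_ge (m * η) a with hlarge | hsmall
  · have hnull : μ {ω | A m ω ≤ A 0 ω - a} = 0 :=
      measure_eq_zero_iff_ae_notMem.2 (hdrift.mono fun ω h hω => by
        rw [Set.mem_ofPred_eq] at hω; linarith)
    simp [hnull, Real.exp_nonneg]
  have hm : (0 : ℝ) < m := pos_of_mul_pos_left (ha.trans_le hsmall) hη.le
  set t := 2 * a / (3 * m * η * N) with ht
  have htN : t * N ≤ 2 / 3 := by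
    rw [ht, div_mul_eq_mul_div, div_le_iff₀ (by positivity)]
    nlinarith
  have hevent : {ω | A m ω ≤ A 0 ω - a} = {ω | a ≤ A 0 ω - A m ω} := by
    ext ω; exact (le_sub_comm (a := a)).symm
  calc (μ {ω | A m ω ≤ A 0 ω - a}).toReal
      ≤ Real.exp (-t * a) * ProbabilityTheory.mgf (fun ω => A 0 ω - A m ω) μ t := by
        rw [hevent, ← measureReal_def]
        exact ProbabilityTheory.measure_ge_le_exp_mul_mgf a (by positivity)
          (integrable_exp_mul_of_ae_le ((hint 0).sub (hint m)).aestronglyMeasurable hdrift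
            (by positivity))
    _ ≤ Real.exp (-t * a) * Real.exp (3 * η * N * t ^ 2 / 4) ^ m := by
        gcongr
        exact (mgf_sub_le_expChordZero_pow hadapted hint hbdd hsub hη hN.le (by positivity)).trans
          (pow_le_pow_left₀ (expChordZero_nonneg (by linarith) hη.le)
            (expChordZero_le_exp hη hηN (by positivity) htN) m)
    _ = Real.exp (-a ^ 2 / (3 * η * m * N)) := by
        rw [← Real.exp_nat_mul, ← Real.exp_add, ht]
        congr 1
        field_simp
        ring

/-- Azuma-type bound for `(η,N)`-bounded submartingales. -/
theorem stmt_15 {Ω : Type*} {m0 : MeasurableSpace Ω} (μ : Measure Ω)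
    [IsProbabilityMeasure μ] (ℱ : Filtration ℕ m0)
    (A : ℕ → Ω → ℝ) (m : ℕ) (hm : 1 ≤ m) (η N a : ℝ)
    (hη : 0 < η) (hηN : η ≤ N / 10) (ha : 0 < a)
    (hadapted : Adapted ℱ A)
    (hint : ∀ i, Integrable (A i) μ)
    (hbdd : ∀ i < m, ∀ᵐ ω ∂μ, A i ω - η ≤ A (i + 1) ω ∧ A (i + 1) ω ≤ A i ω + N)
    (hsub : ∀ i < m, A i ≤ᵐ[μ] μ[A (i + 1) | ℱ i]) :
    (μ {ω | A m ω ≤ A 0 ω - a}).toReal ≤ Real.exp (-a ^ 2 / (3 * η * m * N)) :=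
  stmt_15_general μ ℱ A m η N a hη hηN ha hadapted hint hbdd hsub
end

section
/- Azuma-type bound for bounded supermartingales: suppose 0 < η ≤ N/10, m ≥ 1 is an integer, 0 < a ≤ ηm/10, and A_0, A_1, …, A_m is an (η,N)-bounded supermartingale, meaning E(A_{i+1} | F_i) ≤ A_i and A_i − η ≤ A_{i+1} ≤ A_i + N almost surely for all i. Then P(A_m ≥ A_0 + a) ≤ exp(−a²/(3ηmN)). -/
/-!
Exponential moment method with the Bernstein-type estimate
`exp x ≤ 1 + x + 3/4 x²` for `|x| ≤ 1`. For an increment `d ∈ [-η, N]` and `0 ≤ t ≤ 1/N` this gives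
`exp (t d) ≤ B + c d` with `B = 1 + 3/4 η N t²` and `c ≥ 0`; since the increments have nonpositive
conditional mean, each step multiplies `E exp (t (A_k - A_0))` by at most `B ≤ exp (3/4 η N t²)`.
Markov's inequality with `t = 2a / (3 η m N)` then gives `exp (-a² / (3 η m N))`.
-/

open MeasureTheory ProbabilityTheory Real

lemma Real.exp_le_one_add_add_three_quarters_mul_sq {x : ℝ} (hx : |x| ≤ 1) :
    exp x ≤ 1 + x + 3 / 4 * x ^ 2 := by
  have h := Real.exp_bound hx (n := 2) (by norm_num)
  rw [Finset.sum_range_succ, Finset.sum_range_one] at h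
  norm_num [Nat.factorial] at h
  rw [abs_le] at h
  nlinarith [sq_abs x]

/-- On `[-η, N]` the quadratic term is dominated by the chord `d ^ 2 ≤ η N + (N - η) d`,
which makes the bound affine in `d`. -/
lemma exp_mul_le_of_mem_Icc {η N t d : ℝ} (hd : d ∈ Set.Icc (-η) N) (ht : 0 ≤ t)
    (htN : t * N ≤ 1) (hηN : η ≤ N) :
    exp (t * d) ≤ 1 + 3 / 4 * η * N * t ^ 2 + (t + 3 / 4 * t ^ 2 * (N - η)) * d := by
  obtain ⟨hdη, hdN⟩ := hd
  have htd : |t * d| ≤ 1 := abs_le.2 ⟨by nlinarith, by nlinarith⟩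
  have hchord : d ^ 2 ≤ η * N + (N - η) * d := by nlinarith
  have := Real.exp_le_one_add_add_three_quarters_mul_sq htd
  nlinarith [mul_le_mul_of_nonneg_left hchord (sq_nonneg t)]

section CondExp

variable {Ω : Type*} {m m0 : MeasurableSpace Ω} {μ : Measure Ω}

lemma integral_mul_nonpos_of_condExp_nonpos (hm : m ≤ m0) [SigmaFinite (μ.trim hm)]
    {X D : Ω → ℝ} (hX : StronglyMeasurable[m] X)
    (hX0 : 0 ≤ X) (hXD : Integrable (X * D) μ) (hD : Integrable D μ)
    (hcond : μ[D | m] ≤ᵐ[μ] 0) :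
    ∫ ω, (X * D) ω ∂μ ≤ 0 := by
  rw [← integral_condExp hm]
  refine integral_nonpos_of_ae ?_
  filter_upwards [condExp_mul_of_stronglyMeasurable_left hX hXD hD, hcond] with ω hpull hneg
  rw [hpull]
  exact mul_nonpos_of_nonneg_of_nonpos (hX0 ω) hneg

lemma integral_exp_mul_add_le (hm : m ≤ m0) [IsFiniteMeasure μ] {X D : Ω → ℝ} {η N t C : ℝ}
    (hX : StronglyMeasurable[m] X) (hXC : ∀ᵐ ω ∂μ, X ω ≤ C) (hD : Integrable D μ)
    (hDbdd : ∀ᵐ ω ∂μ, D ω ∈ Set.Icc (-η) N) (hcond : μ[D | m] ≤ᵐ[μ] 0)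
    (ht : 0 ≤ t) (htN : t * N ≤ 1) (hηN : η ≤ N) :
    ∫ ω, exp (t * (X ω + D ω)) ∂μ ≤ (1 + 3 / 4 * η * N * t ^ 2) * ∫ ω, exp (t * X ω) ∂μ := by
  set B := 1 + 3 / 4 * η * N * t ^ 2
  set c := t + 3 / 4 * t ^ 2 * (N - η)
  set E : Ω → ℝ := fun ω => exp (t * X ω)
  have hE : StronglyMeasurable[m] E := continuous_exp.comp_stronglyMeasurable (hX.const_mul t)
  have hEbdd : ∀ᵐ ω ∂μ, ‖E ω‖ ≤ exp (t * C) := by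
    filter_upwards [hXC] with ω hω
    rw [norm_of_nonneg (exp_pos _).le, exp_le_exp]
    exact mul_le_mul_of_nonneg_left hω ht
  have hEint : Integrable E μ :=
    (integrable_const _).mono' (hE.mono hm).aestronglyMeasurable hEbdd
  have hED : Integrable (E * D) μ := hD.bdd_mul (hE.mono hm).aestronglyMeasurable hEbdd
  have hpt : ∀ᵐ ω ∂μ, exp (t * (X ω + D ω)) ≤ B * E ω + c * (E * D) ω := by
    filter_upwards [hDbdd] with ω hω
    calc exp (t * (X ω + D ω)) = E ω * exp (t * D ω) := by rw [← exp_add, mul_add]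
      _ ≤ E ω * (B + c * D ω) :=
        mul_le_mul_of_nonneg_left (exp_mul_le_of_mem_Icc hω ht htN hηN) (exp_pos _).le
      _ = B * E ω + c * (E * D) ω := by simp only [Pi.mul_apply]; ring
  have hrhs : Integrable (fun ω => B * E ω + c * (E * D) ω) μ :=
    (hEint.const_mul B).add (hED.const_mul c)
  have hlhs : Integrable (fun ω => exp (t * (X ω + D ω))) μ := by
    refine hrhs.mono' ?_ ?_
    · exact continuous_exp.comp_aestronglyMeasurable
        (((hX.mono hm).aestronglyMeasurable.add hD.aestronglyMeasurable).const_mul t)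
    · filter_upwards [hpt] with ω hω
      rwa [norm_of_nonneg (exp_pos _).le]
  have hc : 0 ≤ c := add_nonneg ht (mul_nonneg (by positivity) (sub_nonneg.2 hηN))
  have hcross := integral_mul_nonpos_of_condExp_nonpos hm hE (fun ω => (exp_pos _).le) hED hD
    hcond
  calc ∫ ω, exp (t * (X ω + D ω)) ∂μ ≤ ∫ ω, B * E ω + c * (E * D) ω ∂μ :=
        integral_mono_ae hlhs hrhs hpt
    _ = B * ∫ ω, E ω ∂μ + c * ∫ ω, (E * D) ω ∂μ := by
        rw [integral_add (hEint.const_mul B) (hED.const_mul c), integral_const_mul,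
          integral_const_mul]
    _ ≤ B * ∫ ω, E ω ∂μ := by nlinarith

end CondExp

structure IsBoundedSupermartingale {Ω : Type*} {m0 : MeasurableSpace Ω} (μ : Measure Ω)
    (ℱ : Filtration ℕ m0) (A : ℕ → Ω → ℝ) (η N : ℝ) (m : ℕ) : Prop where
  adapted : Adapted ℱ A
  integrable : ∀ i, Integrable (A i) μ
  ae_sub_le_and_le_add : ∀ i < m, ∀ᵐ ω ∂μ, A i ω - η ≤ A (i + 1) ω ∧ A (i + 1) ω ≤ A i ω + N
  condExp_le : ∀ i < m, μ[A (i + 1) | ℱ i] ≤ᵐ[μ] A i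

namespace IsBoundedSupermartingale

variable {Ω : Type*} {m0 : MeasurableSpace Ω} {μ : Measure Ω} {ℱ : Filtration ℕ m0}
  {A : ℕ → Ω → ℝ} {η N : ℝ} {m : ℕ}

lemma ae_sub_le (hA : IsBoundedSupermartingale μ ℱ A η N m) :
    ∀ k ≤ m, ∀ᵐ ω ∂μ, A k ω - A 0 ω ≤ k * N := by
  intro k
  induction k with
  | zero => simp
  | succ k ih =>
    intro hk
    filter_upwards [ih (by omega), hA.ae_sub_le_and_le_add k hk] with ω hω hstep
    push_cast
    linarith [hstep.2]

lemma condExp_increment_nonpos [IsFiniteMeasure μ] (hA : IsBoundedSupermartingale μ ℱ A η N m)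
    {k : ℕ} (hk : k < m) : μ[A (k + 1) - A k | ℱ k] ≤ᵐ[μ] 0 := by
  have hAk : μ[A k | ℱ k] = A k :=
    condExp_of_stronglyMeasurable (ℱ.le k) (hA.adapted k).stronglyMeasurable (hA.integrable k)
  filter_upwards [condExp_sub (hA.integrable (k + 1)) (hA.integrable k) (ℱ k),
    hA.condExp_le k hk] with ω hsub hle
  rw [hsub, Pi.sub_apply, hAk]
  exact sub_nonpos.2 hle

lemma integral_exp_mul_sub_le_pow [IsProbabilityMeasure μ]
    (hA : IsBoundedSupermartingale μ ℱ A η N m) (hη : 0 ≤ η) {t : ℝ} (ht : 0 ≤ t)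
    (htN : t * N ≤ 1) (hηN : η ≤ N) :
    ∀ k ≤ m, ∫ ω, exp (t * (A k ω - A 0 ω)) ∂μ ≤ (1 + 3 / 4 * η * N * t ^ 2) ^ k := by
  intro k
  induction k with
  | zero => simp
  | succ k ih =>
    intro hk
    have hB : 0 ≤ 1 + 3 / 4 * η * N * t ^ 2 := by have : 0 ≤ N := hη.trans hηN; positivity
    have hX : StronglyMeasurable[ℱ k] (A k - A 0) :=
      ((hA.adapted k).sub ((hA.adapted 0).mono (ℱ.mono k.zero_le) le_rfl)).stronglyMeasurable
    have hDbdd : ∀ᵐ ω ∂μ, (A (k + 1) - A k) ω ∈ Set.Icc (-η) N := by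
      filter_upwards [hA.ae_sub_le_and_le_add k hk] with ω hω
      simp only [Set.mem_Icc, Pi.sub_apply]
      constructor <;> linarith [hω.1, hω.2]
    have hstep := integral_exp_mul_add_le (ℱ.le k) hX (hA.ae_sub_le k (by omega))
      ((hA.integrable (k + 1)).sub (hA.integrable k)) hDbdd (hA.condExp_increment_nonpos hk)
      ht htN hηN
    calc ∫ ω, exp (t * (A (k + 1) ω - A 0 ω)) ∂μ
        = ∫ ω, exp (t * ((A k - A 0) ω + (A (k + 1) - A k) ω)) ∂μ := by simp
      _ ≤ (1 + 3 / 4 * η * N * t ^ 2) * ∫ ω, exp (t * (A k ω - A 0 ω)) ∂μ := hstep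
      _ ≤ (1 + 3 / 4 * η * N * t ^ 2) * (1 + 3 / 4 * η * N * t ^ 2) ^ k :=
        mul_le_mul_of_nonneg_left (ih (by omega)) hB
      _ = (1 + 3 / 4 * η * N * t ^ 2) ^ (k + 1) := (pow_succ' _ k).symm

lemma integrable_exp_mul_sub [IsFiniteMeasure μ] (hA : IsBoundedSupermartingale μ ℱ A η N m)
    {t : ℝ} (ht : 0 ≤ t) {k : ℕ} (hk : k ≤ m) :
    Integrable (fun ω => exp (t * (A k ω - A 0 ω))) μ := by
  refine (integrable_const (exp (t * (k * N)))).mono' ?_ ?_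
  · exact continuous_exp.comp_aestronglyMeasurable
      (((hA.integrable k).sub (hA.integrable 0)).aestronglyMeasurable.const_mul t)
  · filter_upwards [hA.ae_sub_le k hk] with ω hω
    rw [norm_of_nonneg (exp_pos _).le, exp_le_exp]
    exact mul_le_mul_of_nonneg_left hω ht

lemma mgf_sub_le [IsProbabilityMeasure μ] (hA : IsBoundedSupermartingale μ ℱ A η N m)
    (hη : 0 ≤ η) {t : ℝ} (ht : 0 ≤ t) (htN : t * N ≤ 1) (hηN : η ≤ N) :
    mgf (fun ω => A m ω - A 0 ω) μ t ≤ exp (3 / 4 * η * N * t ^ 2 * m) :=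
  calc mgf (fun ω => A m ω - A 0 ω) μ t ≤ (1 + 3 / 4 * η * N * t ^ 2) ^ m :=
        hA.integral_exp_mul_sub_le_pow hη ht htN hηN m le_rfl
    _ ≤ exp (3 / 4 * η * N * t ^ 2) ^ m := by
        have : 0 ≤ N := hη.trans hηN
        gcongr
        linarith [add_one_le_exp (3 / 4 * η * N * t ^ 2)]
    _ = exp (3 / 4 * η * N * t ^ 2 * m) := by rw [← exp_nat_mul, mul_comm]

end IsBoundedSupermartingale

theorem stmt_16_general {Ω : Type*} {m0 : MeasurableSpace Ω} (μ : Measure Ω)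
    [IsProbabilityMeasure μ] (ℱ : Filtration ℕ m0)
    (A : ℕ → Ω → ℝ) (m : ℕ) (η N a : ℝ)
    (hη : 0 < η) (hηN : η ≤ N / 10) (ha0 : 0 < a) (ha : a ≤ η * m / 10)
    (hadapted : Adapted ℱ A)
    (hint : ∀ i, Integrable (A i) μ)
    (hbdd : ∀ i < m, ∀ᵐ ω ∂μ, A i ω - η ≤ A (i + 1) ω ∧ A (i + 1) ω ≤ A i ω + N)
    (hsup : ∀ i < m, μ[A (i + 1) | ℱ i] ≤ᵐ[μ] A i) :
    (μ {ω | A 0 ω + a ≤ A m ω}).toReal ≤ Real.exp (-a ^ 2 / (3 * η * m * N)) := by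
  have hA : IsBoundedSupermartingale μ ℱ A η N m := ⟨hadapted, hint, hbdd, hsup⟩
  have hm : (0 : ℝ) < m := by nlinarith
  have hN : 0 < N := by linarith
  set t := 2 * a / (3 * η * m * N) with ht_def
  have ht : 0 ≤ t := by positivity
  have htN : t * N ≤ 1 := by
    rw [ht_def, div_mul_eq_mul_div, div_le_one (by positivity)]
    nlinarith
  calc (μ {ω | A 0 ω + a ≤ A m ω}).toReal = μ.real {ω | a ≤ A m ω - A 0 ω} := by
        simp_rw [measureReal_def, le_sub_iff_add_le']
    _ ≤ exp (-t * a) * mgf (fun ω => A m ω - A 0 ω) μ t :=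
        measure_ge_le_exp_mul_mgf a ht (hA.integrable_exp_mul_sub ht le_rfl)
    _ ≤ exp (-t * a) * exp (3 / 4 * η * N * t ^ 2 * m) := by
        gcongr
        exact hA.mgf_sub_le hη.le ht htN (by linarith)
    _ = exp (-a ^ 2 / (3 * η * m * N)) := by
        rw [← exp_add, ht_def]
        congr 1
        field_simp
        ring

/-- Azuma-type bound for `(η,N)`-bounded supermartingales. -/
theorem stmt_16 {Ω : Type*} {m0 : MeasurableSpace Ω} (μ : Measure Ω)
    [IsProbabilityMeasure μ] (ℱ : Filtration ℕ m0)
    (A : ℕ → Ω → ℝ) (m : ℕ) (hm : 1 ≤ m) (η N a : ℝ)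
    (hη : 0 < η) (hηN : η ≤ N / 10) (ha0 : 0 < a) (ha : a ≤ η * m / 10)
    (hadapted : Adapted ℱ A)
    (hint : ∀ i, Integrable (A i) μ)
    (hbdd : ∀ i < m, ∀ᵐ ω ∂μ, A i ω - η ≤ A (i + 1) ω ∧ A (i + 1) ω ≤ A i ω + N)
    (hsup : ∀ i < m, μ[A (i + 1) | ℱ i] ≤ᵐ[μ] A i) :
    (μ {ω | A 0 ω + a ≤ A m ω}).toReal ≤ Real.exp (-a ^ 2 / (3 * η * m * N)) :=
  stmt_16_general μ ℱ A m η N a hη hηN ha0 ha hadapted hint hbdd hsup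
end
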